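/- Let i ∈ {0,1} and let B0(v,s), B1(v,s) ∈ {0,1} (for v ∈ V and rounds s ≥ 1) and a round t ≥ 1 satisfy: (1) for each j ∈ {0,1}, all rounds s ≥ t and all correct v, w: Bj(v,s) = Bj(w,s); (2) for all correct v: Bi(v,t) = 1 and Bi(v,t+Ψi) = 1; (3) for all correct v and all rounds s with t < s < t+Φ or t+Ψi < s < t+Ψi+Φ: Bi(v,s) = 0; (4) for all correct v and all rounds t' with t < t' < t+Ψi+Φ: if B_{1−i}(v,t') = 1, then B_{1−i}(u,s) = 0 for every correct u and every round s with t' < s ≤ t'+C that is not of the form t' + k·Ψ_{1−i} for an integer k ≥ 0. Define B(v,s) = max(B0(v,s), B1(v,s)). Then there exists a round t* ∈ {t, t+Ψi} such that B(v,t*) = 1 for every correct v and B(v,s) = 0 for every correct v and every round s with t* < s < t*+Φ (i.e., a good pulse of the weak Φ-pulser occurs by round t + Ψi). -/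
import Mathlib


theorem good_pulse_aux {V : Type*} (F : Set V) (Φ : ℕ) (hΦ : 1 ≤ Φ)
    (A Bo : V → ℕ → ℕ) (ca cb : ℕ)
    (hc : (ca = 2 ∧ cb = 3) ∨ (ca = 3 ∧ cb = 2))
    (hbB : ∀ v, v ∉ F → ∀ s, Bo v s = 0 ∨ Bo v s = 1)
    (t : ℕ)
    (h2 : ∀ v, v ∉ F → A v t = 1 ∧ A v (t + ca * Φ) = 1)
    (h3 : ∀ v, v ∉ F → ∀ s,
      ((t < s ∧ s < t + Φ) ∨ (t + ca * Φ < s ∧ s < t + ca * Φ + Φ)) → A v s = 0)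
    (h4 : ∀ v, v ∉ F → ∀ t', t < t' → t' < t + ca * Φ + Φ → Bo v t' = 1 →
      ∀ u, u ∉ F → ∀ s, t' < s → s ≤ t' + (4 * Φ + 2) →
        (¬∃ k, s = t' + k * cb * Φ) → Bo u s = 0) :
    ∃ tg, (tg = t ∨ tg = t + ca * Φ) ∧
      (∀ v, v ∉ F → max (A v tg) (Bo v tg) = 1) ∧
      (∀ v, v ∉ F → ∀ s, tg < s → s < tg + Φ → max (A v s) (Bo v s) = 0) := by
  have hca : ca ≤ 3 ∧ 2 ≤ ca ∧ ca + cb = 5 ∧ 2 ≤ cb := by rcases hc with ⟨h, h'⟩ | ⟨h, h'⟩ <;> omega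
  by_cases hq : ∀ v, v ∉ F → ∀ s, t < s → s < t + Φ → Bo v s = 0
  · refine ⟨t, Or.inl rfl, ?_, ?_⟩
    · intro v hv
      have h2v := (h2 v hv).1
      have hb := hbB v hv t
      omega
    · intro v hv s hs1 hs2
      have hi := h3 v hv s (Or.inl ⟨hs1, hs2⟩)
      have hj := hq v hv s hs1 hs2
      omega
  · push_neg at hq
    obtain ⟨w, hw, s, hs1, hs2, hws⟩ := hq
    have hws1 : Bo w s = 1 := by
      rcases hbB w hw s with h | h
      · exact absurd h hws
      · exact h
    have hsilent : ∀ v, v ∉ F → ∀ s', t + ca * Φ < s' → s' < t + ca * Φ + Φ →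
        Bo v s' = 0 := by
      intro v hv s' hl hr
      have hca2 : ca * Φ ≤ 3 * Φ := Nat.mul_le_mul_right Φ hca.1
      have hca3 : 2 * Φ ≤ ca * Φ := Nat.mul_le_mul_right Φ hca.2.1
      apply h4 w hw s hs1 (by omega) hws1 v hv s' (by omega) (by omega)
      rintro ⟨k, hk⟩
      rcases hc with ⟨rfl, rfl⟩ | ⟨rfl, rfl⟩ <;>
      · match k, hk with
        | 0, hk => omega
        | 1, hk => omega
        | (n + 2), hk =>
          have hnn : (n + 2) * 3 * Φ = n * (3 * Φ) + 6 * Φ := by ring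
          have hnn2 : (n + 2) * 2 * Φ = n * (2 * Φ) + 4 * Φ := by ring
          omega
    refine ⟨t + ca * Φ, Or.inr rfl, ?_, ?_⟩
    · intro v hv
      have h2v := (h2 v hv).2
      have hb := hbB v hv (t + ca * Φ)
      omega
    · intro v hv s' hl hr
      have hi := h3 v hv s' (Or.inr ⟨hl, hr⟩)
      have hj := hsilent v hv s' hl hr
      omega

/-- Lemma: a good pulse of the weak `Φ`-pulser occurs.
Nodes in `V∖F` are correct, `Φ ≥ 1`, `Ψ0 = 2Φ`, `Ψ1 = 3Φ`
(encoded as `Ψ j = (2 + j) · Φ` for `j : Fin 2`), and `C = 4Φ + 2`.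
Given bits `B0, B1 ∈ {0,1}`, an index `i ∈ {0,1}` and a round `t ≥ 1` with:
(1) from round `t` on all correct nodes agree on both `B0` and `B1`;
(2) all correct nodes have `Bᵢ(·,t) = Bᵢ(·,t+Ψᵢ) = 1`;
(3) all correct nodes have `Bᵢ(·,s) = 0` for `t < s < t+Φ` and for
    `t+Ψᵢ < s < t+Ψᵢ+Φ`;
(4) if a correct node has `B_{1−i}(·,t') = 1` for some `t < t' < t+Ψᵢ+Φ`,
    then all correct nodes have `B_{1−i}(·,s) = 0` for all `t' < s ≤ t'+C`
    that are not of the form `t' + k·Ψ_{1−i}`;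
then, setting `B(v,s) = max(B0(v,s), B1(v,s))`, a good pulse occurs in round
`t` or round `t+Ψᵢ`: all correct nodes output `1` in that round and `0` in
each of the `Φ−1` following rounds. -/
theorem good_pulse_occurs {V : Type*} (F : Set V) (Φ : ℕ) (hΦ : 1 ≤ Φ)
    (B : Fin 2 → V → ℕ → ℕ) (i : Fin 2) (t : ℕ) (ht : 1 ≤ t)
    (hbits : ∀ j : Fin 2, ∀ v, v ∉ F → ∀ s, B j v s = 0 ∨ B j v s = 1)
    -- (1) agreement from round `t` on:
    (h1 : ∀ j : Fin 2, ∀ s, t ≤ s → ∀ v, v ∉ F → ∀ w, w ∉ F → B j v s = B j w s)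
    -- (2) block `i` pulses in rounds `t` and `t + Ψᵢ`:
    (h2 : ∀ v, v ∉ F → B i v t = 1 ∧ B i v (t + (2 + (i : ℕ)) * Φ) = 1)
    -- (3) block `i` is silent for `Φ − 1` rounds after each of these pulses:
    (h3 : ∀ v, v ∉ F → ∀ s,
      ((t < s ∧ s < t + Φ) ∨
        (t + (2 + (i : ℕ)) * Φ < s ∧ s < t + (2 + (i : ℕ)) * Φ + Φ)) →
      B i v s = 0)
    -- (4) pulses of block `1 − i` within the window recur only at multiples
    --     of `Ψ_{1−i}` during the following `C = 4Φ + 2` rounds: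
    (h4 : ∀ v, v ∉ F → ∀ t', t < t' → t' < t + (2 + (i : ℕ)) * Φ + Φ →
      B (1 - i) v t' = 1 →
      ∀ u, u ∉ F → ∀ s, t' < s → s ≤ t' + (4 * Φ + 2) →
        (¬∃ k, s = t' + k * (2 + ((1 - i : Fin 2) : ℕ)) * Φ) →
        B (1 - i) u s = 0) :
    ∃ tg, (tg = t ∨ tg = t + (2 + (i : ℕ)) * Φ) ∧
      (∀ v, v ∉ F → max (B 0 v tg) (B 1 v tg) = 1) ∧
      (∀ v, v ∉ F → ∀ s, tg < s → s < tg + Φ → max (B 0 v s) (B 1 v s) = 0) := by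
  have hcases : (i = 0 ∧ (1 - i : Fin 2) = 1) ∨ (i = 1 ∧ (1 - i : Fin 2) = 0) := by
    fin_cases i <;> simp
  rcases hcases with ⟨rfl, e2⟩ | ⟨rfl, e2⟩
  · rw [e2] at h4
    simp only [e2, Fin.val_zero, Fin.val_one] at h2 h3 h4 ⊢
    exact good_pulse_aux F Φ hΦ (B 0) (B 1) (2 + 0) (2 + 1)
      (Or.inl ⟨by norm_num, by norm_num⟩) (hbits 1) t h2 h3 h4
  · rw [e2] at h4
    simp only [e2, Fin.val_zero, Fin.val_one] at h2 h3 h4 ⊢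
    obtain ⟨tg, htg, hmax, hsil⟩ := good_pulse_aux F Φ hΦ (B 1) (B 0) (2 + 1) (2 + 0)
      (Or.inr ⟨by norm_num, by norm_num⟩) (hbits 0) t h2 h3 h4
    exact ⟨tg, htg, fun v hv => by rw [max_comm]; exact hmax v hv,
      fun v hv s h h' => by rw [max_comm]; exact hsil v hv s h h'⟩
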